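/- At every pure Nash equilibrium of the four-player Prisoners' Dilemma, both mercenary players Pm and Qm receive payoff 2, and each altruistic player receives payoff 2 if it chose C and payoff 1 if it chose D. -/
import Mathlib


/-- A strategy: cooperate or defect. -/
inductive Strat | C | D
deriving DecidableEq

open Strat

/-- A person's actual action is `C` iff both internal players choose `C`. -/
def act (a b : Strat) : Strat := if a = C ∧ b = C then C else D

/-- Base payoff `u x y` for a person acting `x` against the other acting `y`. -/
def u : Strat → Strat → ℤ
  | C, C => 3
  | C, D => 1
  | D, C => 4
  | D, D => 2

/-- Payoff of the mercenary player Pm. -/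
def payPm (pm pa qm qa : Strat) : ℤ := u (act pm pa) (act qm qa)

/-- Payoff of the altruistic player Pa (guilt of 1 if Pa defects). -/
def payPa (pm pa qm qa : Strat) : ℤ :=
  u (act pm pa) (act qm qa) - (if pa = D then 1 else 0)

/-- Payoff of the mercenary player Qm. -/
def payQm (pm pa qm qa : Strat) : ℤ := u (act qm qa) (act pm pa)

/-- Payoff of the altruistic player Qa (guilt of 1 if Qa defects). -/
def payQa (pm pa qm qa : Strat) : ℤ :=
  u (act qm qa) (act pm pa) - (if qa = D then 1 else 0)

/-- `(pm, pa, qm, qa)` is a pure Nash equilibrium: no single player can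
strictly increase their own payoff by unilaterally changing their strategy. -/
def isNash (pm pa qm qa : Strat) : Prop :=
  (∀ pm' : Strat, payPm pm' pa qm qa ≤ payPm pm pa qm qa) ∧
  (∀ pa' : Strat, payPa pm pa' qm qa ≤ payPa pm pa qm qa) ∧
  (∀ qm' : Strat, payQm pm pa qm' qa ≤ payQm pm pa qm qa) ∧
  (∀ qa' : Strat, payQa pm pa qm qa' ≤ payQa pm pa qm qa)

instance : Fintype Strat := ⟨{Strat.C, Strat.D}, by intro x; cases x <;> simp⟩

theorem nash_payoffs (pm pa qm qa : Strat) (h : isNash pm pa qm qa) :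
    payPm pm pa qm qa = 2 ∧ payQm pm pa qm qa = 2 ∧
    payPa pm pa qm qa = (if pa = Strat.C then 2 else 1) ∧
    payQa pm pa qm qa = (if qa = Strat.C then 2 else 1) := by
  revert h
  unfold isNash
  cases pm <;> cases pa <;> cases qm <;> cases qa <;> decide
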